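/- arXiv:2210.01224 — 10 statements merged into one kernel-verified Lean document; each statement's English description precedes it below -/
import Mathlib

section
/- Let M_{a,b} be a singular ACM with d = gcd(a,b) > 1. If x, y ∈ M_{a,b} with x, y ≠ 1, y divides x in ℤ, and d divides x/y in ℤ, then x/y ∈ M_{a,b}. -/
/-- Membership in the arithmetical congruence monoid `M_{a,b} = (a + b ℕ₀) ∪ {1}`. -/
def acmMem (a b x : ℕ) : Prop := x = 1 ∨ ∃ k : ℕ, x = a + k * b

/-- `x` is an atom (irreducible) of `M_{a,b}`. -/
def acmAtom (a b x : ℕ) : Prop :=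
  acmMem a b x ∧ x ≠ 1 ∧
    ∀ y z : ℕ, acmMem a b y → acmMem a b z → x = y * z → y = 1 ∨ z = 1

/-- `s` is a factorization of `x` into atoms of `M_{a,b}`. -/
def acmFactorization (a b x : ℕ) (s : Multiset ℕ) : Prop :=
  (∀ u ∈ s, acmAtom a b u) ∧ s.prod = x

/-- The distance between two factorizations. -/
def facDist (s t : Multiset ℕ) : ℕ := max (Multiset.card (s - t)) (Multiset.card (t - s))

/-- There is an `N`-chain of factorizations of `x` from `z₁` to `z₂` in `M_{a,b}`. -/
def acmNChain (a b x N : ℕ) (z₁ z₂ : Multiset ℕ) : Prop :=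
  ∃ L : List (Multiset ℕ), L ≠ [] ∧ L.head? = some z₁ ∧ L.getLast? = some z₂ ∧
    (∀ z ∈ L, acmFactorization a b x z) ∧ L.Chain' (fun s t => facDist s t ≤ N)

/-- The set of `N` such that any two factorizations of any element of `M_{a,b}`
are connected by an `N`-chain; `c(M) = n` iff `n` is the least element of this set. -/
def acmCatSet (a b : ℕ) : Set ℕ :=
  {N | ∀ x, acmMem a b x → ∀ z₁ z₂, acmFactorization a b x z₁ →
      acmFactorization a b x z₂ → acmNChain a b x N z₁ z₂}

/-- Divisibility inside the monoid `M_{a,b}`. -/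
def acmDvd (a b x y : ℕ) : Prop := ∃ k, acmMem a b k ∧ x * k = y

/-- `s` is a bullet of `x` in `M_{a,b}`. -/
def acmBullet (a b x : ℕ) (s : Multiset ℕ) : Prop :=
  (∀ u ∈ s, acmAtom a b u) ∧ acmDvd a b x s.prod ∧
    ∀ t : Multiset ℕ, t ≤ s → t ≠ s → ¬ acmDvd a b x t.prod

/-- Omega primality of `x` in `M_{a,b}`: the sup of the lengths of bullets of `x`. -/
noncomputable def acmOmega (a b x : ℕ) : ℕ∞ :=
  sSup {n : ℕ∞ | ∃ s : Multiset ℕ, acmBullet a b x s ∧ (Multiset.card s : ℕ∞) = n}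

/-- The set of factorization lengths of `x` in `M_{a,b}`. -/
def acmLengthSet (a b x : ℕ) : Set ℕ :=
  {n | ∃ s : Multiset ℕ, acmFactorization a b x s ∧ Multiset.card s = n}

/-- `x` has at least two distinct factorization lengths. -/
def acmLI (a b x : ℕ) : Prop := ∃ m ∈ acmLengthSet a b x, ∃ n ∈ acmLengthSet a b x, m ≠ n

/-- The length density of an element `x` of `M_{a,b}`. -/
noncomputable def acmLD (a b x : ℕ) : ℝ :=
  (((acmLengthSet a b x).ncard : ℝ) - 1) /
    (((sSup (acmLengthSet a b x) : ℕ) : ℝ) - ((sInf (acmLengthSet a b x) : ℕ) : ℝ))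

/-! Both `x` and `y` are `≡ a (mod b)`, so `x = y c` gives `a c ≡ a (mod b)`. Since also
`b ∣ a (a - 1)`, the modulus `b` divides `gcd(a, b) · gcd(a - 1, b)`, a product of coprime factors.
The first factor divides `c - a` because it divides `c`, the second because
`c - a = (a c - a) - (a - 1) c`. Hence `c ≡ a (mod b)`, and `0 < c`, `a ≤ b` put `c` in `a + bℕ₀`. -/

theorem dvd_sub_of_dvd_mul_sub_of_gcd_dvd {R : Type*} [CommRing R] [IsDomain R] [GCDMonoid R]
    {a b c : R} (hidem : b ∣ a * a - a) (hac : b ∣ a * c - a) (hdc : gcd a b ∣ c) :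
    b ∣ c - a := by
  have hcop : IsCoprime (gcd a b) (gcd (a - 1) b) :=
    ((IsCoprime.sub_one_right_of_dvd (dvd_refl a)).of_isCoprime_of_dvd_left
      (gcd_dvd_left a b)).of_isCoprime_of_dvd_right (gcd_dvd_left (a - 1) b)
  have hb : b ∣ gcd a b * gcd (a - 1) b :=
    calc b ∣ gcd b (a * (a - 1)) := dvd_gcd dvd_rfl (by rwa [mul_sub_one])
      _ ∣ gcd b a * gcd b (a - 1) := gcd_mul_dvd_mul_gcd b a (a - 1)
      _ ∣ gcd a b * gcd (a - 1) b := mul_dvd_mul (gcd_comm' b a).dvd (gcd_comm' b (a - 1)).dvd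
  have hd : gcd a b ∣ c - a := dvd_sub hdc (gcd_dvd_left a b)
  have he : gcd (a - 1) b ∣ c - a := by
    have hsplit : c - a = (a * c - a) - (a - 1) * c := by ring
    rw [hsplit]
    exact dvd_sub ((gcd_dvd_right _ _).trans hac) (dvd_mul_of_dvd_left (gcd_dvd_left _ _) c)
  exact hb.trans (hcop.mul_dvd hd he)

theorem Nat.modEq_of_mul_modEq_of_mul_self_modEq {a b c : ℕ} (hidem : a * a ≡ a [MOD b])
    (hac : a * c ≡ a [MOD b]) (hdc : Nat.gcd a b ∣ c) : c ≡ a [MOD b] := by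
  have hidem' : (b : ℤ) ∣ a * a - a := by exact_mod_cast Nat.modEq_iff_dvd.mp hidem.symm
  have hac' : (b : ℤ) ∣ a * c - a := by exact_mod_cast Nat.modEq_iff_dvd.mp hac.symm
  have hdc' : GCDMonoid.gcd (a : ℤ) b ∣ c := by
    rw [← Int.coe_gcd, Int.gcd_natCast_natCast]
    exact_mod_cast hdc
  exact (Nat.modEq_iff_dvd.mpr (dvd_sub_of_dvd_mul_sub_of_gcd_dvd hidem' hac' hdc')).symm

section ACM

variable {a b x : ℕ}

theorem acmMem.modEq (hx : acmMem a b x) (hx1 : x ≠ 1) : x ≡ a [MOD b] := by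
  obtain rfl | ⟨k, rfl⟩ := hx
  · exact absurd rfl hx1
  · exact Nat.add_mul_mod_self_right a k b

theorem acmMem.pos (ha : 0 < a) (hx : acmMem a b x) : 0 < x := by
  obtain rfl | ⟨k, rfl⟩ := hx <;> omega

theorem acmMem_of_modEq (hab : a ≤ b) (hx : 0 < x) (h : x ≡ a [MOD b]) : acmMem a b x := by
  obtain hax | hxa := le_or_gt a x
  · obtain ⟨k, hk⟩ := (Nat.modEq_iff_dvd' hax).mp h.symm
    exact Or.inr ⟨k, by rw [mul_comm]; omega⟩
  · have := Nat.le_of_dvd (by omega) ((Nat.modEq_iff_dvd' hxa.le).mp h)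
    omega

end ACM

theorem singular_quotient_mem_general (a b : ℕ) (ha : 0 < a) (hab : a ≤ b)
    (hacm : a * a ≡ a [MOD b]) :
    ∀ x y c : ℕ, acmMem a b x → acmMem a b y → x ≠ 1 → y ≠ 1 → x = y * c →
      Nat.gcd a b ∣ c → acmMem a b c := by
  intro x y c hx hy hx1 hy1 hxy hdc
  have hac : a * c ≡ a [MOD b] :=
    calc a * c ≡ y * c [MOD b] := (hy.modEq hy1).symm.mul_right c
      _ = x := hxy.symm
      _ ≡ a [MOD b] := hx.modEq hx1
  have hc : 0 < c := Nat.pos_of_mul_pos_left (hxy ▸ hx.pos ha)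
  exact acmMem_of_modEq hab hc (Nat.modEq_of_mul_modEq_of_mul_self_modEq hacm hac hdc)

/-- In a singular ACM with `d = gcd(a,b) > 1`: if `x, y ∈ M_{a,b}`, `x,y ≠ 1`,
`y` divides `x` in `ℤ` (say `x = y·c`) and `d ∣ c`, then `c = x/y ∈ M_{a,b}`. -/
theorem singular_quotient_mem (a b : ℕ) (ha : 0 < a) (hab : a ≤ b)
    (hacm : a * a ≡ a [MOD b]) (hsing : 1 < Nat.gcd a b) :
    ∀ x y c : ℕ, acmMem a b x → acmMem a b y → x ≠ 1 → y ≠ 1 → x = y * c →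
      Nat.gcd a b ∣ c → acmMem a b c :=
  singular_quotient_mem_general a b ha hab hacm
end

section
/- Let M_{a,b} be a singular ACM with d = gcd(a,b) > 1. If x, y ∈ M_{a,b} with x, y ≠ 1, y divides x in ℤ, and x is irreducible in M_{a,b}, then y is irreducible in M_{a,b}. -/
/-- In a singular ACM with `gcd(a,b) > 1`: if `x, y ∈ M_{a,b}`, `x,y ≠ 1`,
`y ∣ x` in `ℤ` and `x` is irreducible in `M_{a,b}`, then `y` is irreducible in `M_{a,b}`. -/
theorem singular_divisor_of_atom_is_atom (a b : ℕ) (ha : 0 < a) (hab : a ≤ b)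
    (hacm : a * a ≡ a [MOD b]) (hsing : 1 < Nat.gcd a b) :
    ∀ x y : ℕ, acmMem a b x → acmMem a b y → x ≠ 1 → y ≠ 1 → y ∣ x →
      acmAtom a b x → acmAtom a b y := by
  have ha2 : 2 ≤ a := by
    have := Nat.le_of_dvd ha (Nat.gcd_dvd_left a b)
    omega
  intro x y hxm hym hx1 hy1 hyx hxatom
  refine ⟨hym, hy1, ?_⟩
  intro u v hum hvm huv
  rcases hum with hu1 | ⟨i, hui⟩
  · exact Or.inl hu1
  rcases hvm with hv1 | ⟨j, hvj⟩
  · exact Or.inr hv1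
  exfalso
  obtain ⟨c, hc⟩ := hyx
  obtain ⟨k, hk⟩ : ∃ k, x = a + k * b := by
    rcases hxm with h | h
    · exact absurd h hx1
    · exact h
  have hc1 : 1 ≤ c := by
    rcases Nat.eq_zero_or_pos c with h | h
    · subst h; simp at hc; omega
    · exact h
  -- congruences mod b
  have hxa : x ≡ a [MOD b] := by
    rw [hk]; exact (Nat.modEq_iff_dvd' (by omega)).2 ⟨k, by simp [Nat.mul_comm]⟩ |>.symm
  have hua : u ≡ a [MOD b] := by
    rw [hui]; exact (Nat.modEq_iff_dvd' (by omega)).2 ⟨i, by simp [Nat.mul_comm]⟩ |>.symm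
  have hva : v ≡ a [MOD b] := by
    rw [hvj]; exact (Nat.modEq_iff_dvd' (by omega)).2 ⟨j, by simp [Nat.mul_comm]⟩ |>.symm
  have huva : u * v ≡ a [MOD b] := (hua.mul hva).trans hacm
  have hca : a * c ≡ a [MOD b] := by
    calc a * c ≡ (u * v) * c [MOD b] := (huva.symm.mul_right c)
    _ = x := by rw [← huv, ← hc]
    _ ≡ a [MOD b] := hxa
  have hvca : v * c ≡ a [MOD b] := (hva.mul_right c).trans hca
  have hvc_ge : a ≤ v * c := by
    calc a ≤ v := by omega
    _ = v * 1 := by ring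
    _ ≤ v * c := Nat.mul_le_mul_left v hc1
  have hvcm : acmMem a b (v * c) := by
    obtain ⟨m, hm⟩ := (Nat.modEq_iff_dvd' hvc_ge).1 hvca.symm
    rw [Nat.mul_comm b m] at hm
    exact Or.inr ⟨m, by omega⟩
  have := hxatom.2.2 u (v * c) (Or.inr ⟨i, hui⟩) hvcm
    (by rw [hc, huv, mul_assoc])
  omega
end

section
/- In a regular ACM M_{1,b}, if x ∈ M_{1,b} has prime factorization x = p₁^{e₁} ⋯ p_n^{e_n} in ℤ, then the omega primality of x in M_{1,b} equals e₁ + ⋯ + e_n. -/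
/-!
Inside `M_{1,b}` divisibility agrees with divisibility in `ℕ`, since a cofactor of two elements
that are `≡ 1 (mod b)` is itself `≡ 1 (mod b)`. So bullets of `x` are multisets of atoms whose
product is divisible by `x` minimally. If `x ∣ a * t` minimally, write `x = y * z` with `y ∣ a`,
`z ∣ t`; minimality forces `y ≠ 1` and makes `t` minimal for `z`, so by induction a bullet has at
most `Ω x` factors. Conversely, for every prime `p ∣ x` there is an atom `p * m` with `m` coprime
to `x`: it is the atom through `p` in a factorization of `p * w`, where `w ≡ p⁻¹ (mod b)` and
`w ≡ 1 (mod x)`. Taking one such atom per prime factor of `x` (with multiplicity) gives a product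
`x * w'` with `w'` coprime to `x`, and dropping any atom loses a prime factor of `x`; this is a
bullet of length `Ω x`.
-/

open ArithmeticFunction
open scoped ArithmeticFunction.Omega

theorem card_le_cardFactors_of_minimal_dvd {x : ℕ} (hx : x ≠ 0) {s : Multiset ℕ}
    (hdvd : x ∣ s.prod) (hmin : ∀ t < s, ¬ x ∣ t.prod) : Multiset.card s ≤ Ω x := by
  induction s using Multiset.induction generalizing x with
  | empty => simp
  | cons a t ih =>
    rw [Multiset.prod_cons] at hdvd
    obtain ⟨y, z, hya, hzt, rfl⟩ := exists_dvd_and_dvd_of_dvd_mul hdvd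
    have hy1 : y ≠ 1 := by
      rintro rfl
      exact hmin t (Multiset.lt_cons_self t a) (by simpa using hzt)
    have hzmin : ∀ t' < t, ¬ z ∣ t'.prod := fun t' ht' hz =>
      hmin (a ::ₘ t') (Multiset.cons_lt_cons a ht')
        (by rw [Multiset.prod_cons]; exact mul_dvd_mul hya hz)
    obtain ⟨hy0, hz0⟩ := mul_ne_zero_iff.mp hx
    have hy : 0 < Ω y := cardFactors_pos_iff_one_lt.mpr (by omega)
    have hz := ih hz0 hzt hzmin
    rw [Multiset.card_cons, cardFactors_mul hy0 hz0]
    omega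

theorem not_dvd_prod_of_lt_of_prod_eq_mul_coprime {x w : ℕ} {s t : Multiset ℕ} (hx : x ≠ 0)
    (hs : s.prod = x * w) (hw : x.Coprime w) (hsx : ∀ a ∈ s, ¬ a.Coprime x) (ht : t < s) :
    ¬ x ∣ t.prod := by
  intro hxt
  obtain ⟨a, hat⟩ := Multiset.lt_iff_cons_le.mp ht
  have hxa : x * a ∣ x * w := by
    rw [← hs, mul_comm]
    exact (Multiset.prod_cons a t ▸ mul_dvd_mul_left a hxt).trans
      (Multiset.prod_dvd_prod_of_le hat)
  have haw : a ∣ w := (Nat.mul_dvd_mul_iff_left (Nat.pos_of_ne_zero hx)).mp hxa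
  exact hsx a (Multiset.mem_of_le hat (Multiset.mem_cons_self a t))
    (Nat.Coprime.coprime_dvd_left haw hw.symm)

theorem acmMem_ne_zero {a b x : ℕ} (ha : a ≠ 0) (hx : acmMem a b x) : x ≠ 0 := by
  rcases hx with rfl | ⟨k, rfl⟩ <;> omega

theorem exists_acmFactorization {a b x : ℕ} (hx : acmMem a b x) (hx0 : x ≠ 0) :
    ∃ s, acmFactorization a b x s := by
  induction x using Nat.strong_induction_on with
  | _ x ih =>
  by_cases hx1 : x = 1
  · exact ⟨0, by simp, by simp [hx1]⟩
  by_cases hatom : acmAtom a b x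
  · exact ⟨{x}, by simpa using hatom, by simp⟩
  obtain ⟨y, z, hy, hz, rfl, hy1, hz1⟩ :
      ∃ y z, acmMem a b y ∧ acmMem a b z ∧ x = y * z ∧ y ≠ 1 ∧ z ≠ 1 := by
    simpa [acmAtom, hx, hx1] using hatom
  obtain ⟨hy0, hz0⟩ := mul_ne_zero_iff.mp hx0
  obtain ⟨s, hs, rfl⟩ := ih y (lt_mul_of_one_lt_right (by omega) (by omega)) hy hy0
  obtain ⟨t, ht, rfl⟩ := ih z (lt_mul_of_one_lt_left (by omega) (by omega)) hz hz0
  exact ⟨s + t, fun u hu => (Multiset.mem_add.mp hu).elim (hs u) (ht u), Multiset.prod_add s t⟩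

section RegularACM

variable {b : ℕ}

theorem acmMem_one_iff_modEq (hb : 1 < b) {x : ℕ} : acmMem 1 b x ↔ x ≡ 1 [MOD b] := by
  rw [Nat.ModEq, Nat.one_mod_eq_one.mpr hb.ne']
  constructor
  · rintro (rfl | ⟨k, rfl⟩)
    · exact Nat.one_mod_eq_one.mpr hb.ne'
    · rw [Nat.add_mul_mod_self_right, Nat.one_mod_eq_one.mpr hb.ne']
  · intro hx
    exact Or.inr ⟨x / b, by have := Nat.mod_add_div x b; rw [mul_comm]; omega⟩

theorem acmMem_one_multiset_prod (hb : 1 < b) {s : Multiset ℕ} (hs : ∀ u ∈ s, acmMem 1 b u) :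
    acmMem 1 b s.prod := by
  simp only [acmMem_one_iff_modEq hb] at hs ⊢
  exact Multiset.prod_induction (· ≡ 1 [MOD b]) s
    (fun x y hx hy => by simpa using hx.mul hy) rfl hs

theorem acmMem_one_coprime (hb : 1 < b) {x : ℕ} (hx : acmMem 1 b x) : x.Coprime b :=
  ((acmMem_one_iff_modEq hb).mp hx).gcd_eq.trans (Nat.gcd_one_left b)

theorem acmDvd_one_iff_dvd (hb : 1 < b) {x y : ℕ} (hx : acmMem 1 b x) (hy : acmMem 1 b y) :
    acmDvd 1 b x y ↔ x ∣ y := by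
  refine ⟨fun ⟨k, _, hk⟩ => ⟨k, hk.symm⟩, ?_⟩
  rintro ⟨k, rfl⟩
  refine ⟨k, ?_, rfl⟩
  rw [acmMem_one_iff_modEq hb] at hx hy ⊢
  simpa using (hx.mul_right k).symm.trans hy

theorem acmBullet_one_iff (hb : 1 < b) {x : ℕ} (hx : acmMem 1 b x) {s : Multiset ℕ} :
    acmBullet 1 b x s ↔ (∀ u ∈ s, acmAtom 1 b u) ∧ x ∣ s.prod ∧ ∀ t < s, ¬ x ∣ t.prod := by
  refine and_congr_right fun hs => ?_
  have hmem : ∀ t ≤ s, acmMem 1 b t.prod := fun t hts =>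
    acmMem_one_multiset_prod hb fun u hu => (hs u (Multiset.mem_of_le hts hu)).1
  rw [acmDvd_one_iff_dvd hb hx (hmem s le_rfl)]
  refine and_congr_right fun _ => forall_congr' fun t => ?_
  rw [lt_iff_le_and_ne, and_imp]
  exact imp_congr_right fun hts =>
    imp_congr_right fun _ => by rw [acmDvd_one_iff_dvd hb hx (hmem t hts)]

theorem acmBullet_one_card_le (hb : 1 < b) {x : ℕ} (hx : acmMem 1 b x) {s : Multiset ℕ}
    (hs : acmBullet 1 b x s) : Multiset.card s ≤ Ω x := by
  obtain ⟨-, hdvd, hmin⟩ := (acmBullet_one_iff hb hx).mp hs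
  exact card_le_cardFactors_of_minimal_dvd (acmMem_ne_zero one_ne_zero hx) hdvd hmin

theorem exists_coprime_acmAtom_prime_mul (hb : 1 < b) {p n : ℕ} (hp : p.Prime)
    (hpb : p.Coprime b) (hnb : n.Coprime b) : ∃ m, m.Coprime n ∧ acmAtom 1 b (p * m) := by
  obtain ⟨c, -, hc⟩ := Nat.exists_mul_mod_eq_one_of_coprime hpb hb
  obtain ⟨w, hwc, hw1⟩ := Nat.chineseRemainder hnb.symm c 1
  have hpw : acmMem 1 b (p * w) := by
    rw [acmMem_one_iff_modEq hb]
    exact (hwc.mul_left p).trans (by rw [Nat.ModEq, hc, Nat.one_mod_eq_one.mpr hb.ne'])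
  obtain ⟨s, hs, hsw⟩ := exists_acmFactorization hpw (acmMem_ne_zero one_ne_zero hpw)
  obtain ⟨u, hu, m, rfl⟩ := hp.prime.exists_mem_multiset_dvd (hsw ▸ dvd_mul_right p w)
  have hmw : m ∣ w := (Nat.mul_dvd_mul_iff_left hp.pos).mp (hsw ▸ Multiset.dvd_prod hu)
  exact ⟨m, Nat.Coprime.coprime_dvd_left hmw (hw1.gcd_eq.trans (Nat.gcd_one_left n)), hs _ hu⟩

theorem exists_acmBullet_one_card_eq (hb : 1 < b) {x : ℕ} (hx : acmMem 1 b x) :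
    ∃ s, acmBullet 1 b x s ∧ Multiset.card s = Ω x := by
  have hx0 : x ≠ 0 := acmMem_ne_zero one_ne_zero hx
  have hxb := acmMem_one_coprime hb hx
  choose! m hmx hatom using fun p (hp : p ∈ x.primeFactorsList) =>
    exists_coprime_acmAtom_prime_mul hb (Nat.prime_of_mem_primeFactorsList hp)
      (hxb.coprime_dvd_left (Nat.dvd_of_mem_primeFactorsList hp)) hxb
  set L : Multiset ℕ := (x.primeFactorsList : Multiset ℕ) with hL
  have hprod : (L.map fun p => p * m p).prod = x * (L.map m).prod := by
    rw [Multiset.prod_map_mul, Multiset.map_id', hL, Multiset.prod_coe,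
      Nat.prod_primeFactorsList hx0]
  have hcop : x.Coprime (L.map m).prod := Nat.coprime_multiset_prod_right_iff.mpr <|
    Multiset.forall_mem_map_iff.mpr fun p hp => (hmx p hp).symm
  refine ⟨L.map fun p => p * m p, (acmBullet_one_iff hb hx).mpr ⟨?_, ?_, fun t ht => ?_⟩, ?_⟩
  · exact Multiset.forall_mem_map_iff.mpr hatom
  · exact hprod ▸ dvd_mul_right x _
  · refine not_dvd_prod_of_lt_of_prod_eq_mul_coprime hx0 hprod hcop ?_ ht
    refine Multiset.forall_mem_map_iff.mpr fun p hp hpx => ?_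
    exact (Nat.prime_of_mem_primeFactorsList hp).ne_one <|
      (hpx.coprime_dvd_left (dvd_mul_right p _)).eq_one_of_dvd
        (Nat.dvd_of_mem_primeFactorsList hp)
  · rw [Multiset.card_map, hL, Multiset.coe_card, cardFactors_apply]

end RegularACM

/-- In a regular ACM `M_{1,b}`, the omega primality of `x` equals the number
of prime factors of `x` counted with multiplicity (`e₁ + ⋯ + e_n`). -/
theorem regular_omega_primality (b : ℕ) (hb : 1 < b) (x : ℕ) (hx : acmMem 1 b x) :
    acmOmega 1 b x = (x.primeFactorsList.length : ℕ∞) := by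
  rw [← cardFactors_apply]
  refine IsGreatest.csSup_eq ⟨?_, ?_⟩
  · obtain ⟨s, hs, hcard⟩ := exists_acmBullet_one_card_eq hb hx
    exact ⟨s, hs, by rw [hcard]⟩
  · rintro _ ⟨s, hs, rfl⟩
    exact_mod_cast acmBullet_one_card_le hb hx hs
end

section
/- For every ACM M_{a,b}, the omega primality function on M_{a,b} is unbounded, i.e., sup{ω(x) : x ∈ M_{a,b}} = ∞. -/
section AuxOmega
variable {a b : ℕ}

lemma acm_one_le' (ha : 0 < a) {y : ℕ} (hy : acmMem a b y) : 1 ≤ y := by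
  rcases hy with rfl | ⟨k, rfl⟩
  · exact le_refl 1
  · omega

lemma acm_mul' (ha : 0 < a) (hacm : a * a ≡ a [MOD b]) {x y : ℕ}
    (hx : acmMem a b x) (hy : acmMem a b y) : acmMem a b (x * y) := by
  rcases hx with rfl | ⟨k, rfl⟩
  · simpa using hy
  rcases hy with rfl | ⟨l, rfl⟩
  · right; exact ⟨k, by ring⟩
  obtain ⟨m, hm⟩ : ∃ m, a * a = a + m * b := by
    have hd : b ∣ a * a - a := (Nat.modEq_iff_dvd' (Nat.le_mul_of_pos_left a ha)).mp hacm.symm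
    obtain ⟨m, hm⟩ := hd
    have haa : a ≤ a * a := Nat.le_mul_of_pos_left a ha
    exact ⟨m, by rw [Nat.mul_comm m b]; omega⟩
  right
  refine ⟨m + k * a + a * l + k * l * b, ?_⟩
  have h2 : (a + k * b) * (a + l * b) = a * a + (k * a + a * l + k * l * b) * b := by ring
  rw [h2, hm]; ring

lemma acm_pow' (ha : 0 < a) (hacm : a * a ≡ a [MOD b]) {x : ℕ}
    (hx : acmMem a b x) (n : ℕ) : acmMem a b (x ^ n) := by
  induction n with
  | zero => exact Or.inl (pow_zero x)
  | succ n ih => rw [pow_succ]; exact acm_mul' ha hacm ih hx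

end AuxOmega

/-- For every ACM `M_{a,b}`, the omega primality function is unbounded:
`sup {ω(x) : x ∈ M_{a,b}} = ∞`. -/
theorem acm_omega_unbounded (a b : ℕ) (ha : 0 < a) (hab : a ≤ b)
    (hacm : a * a ≡ a [MOD b]) :
    (⨆ x ∈ {x : ℕ | acmMem a b x}, acmOmega a b x) = ⊤ := by
  have hb : 1 ≤ b := ha.trans_le hab
  set c : ℕ := if a = 1 then a + b else a with hc
  have hcmem : acmMem a b c := by
    rcases eq_or_ne a 1 with h | h
    · right; refine ⟨1, ?_⟩; simp [hc, h]
    · right; refine ⟨0, ?_⟩; simp [hc, h]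
  have hc2 : 2 ≤ c := by
    rcases eq_or_ne a 1 with h | h
    · simp [hc, h]; omega
    · simp [hc, h]; omega
  have hmin : ∀ y : ℕ, acmMem a b y → y ≠ 1 → c ≤ y := by
    intro y hy hy1
    rcases hy with rfl | ⟨k, rfl⟩
    · exact absurd rfl hy1
    rcases eq_or_ne a 1 with h | h
    · subst h
      have hk : 1 ≤ k := by
        rcases Nat.eq_zero_or_pos k with rfl | hk
        · simp at hy1
        · exact hk
      have hkb : b ≤ k * b := Nat.le_mul_of_pos_left b hk
      have hcval : c = 1 + b := by simp [hc]
      omega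
    · simp only [hc, if_neg h]; omega
  have hatom : acmAtom a b c := by
    refine ⟨hcmem, by omega, ?_⟩
    intro y z hy hz hyz
    by_contra hcon
    push_neg at hcon
    obtain ⟨hy1, hz1⟩ := hcon
    have hyc : c ≤ y := hmin y hy hy1
    have hzc : c ≤ z := hmin z hz hz1
    have h1 : c * c ≤ y * z := Nat.mul_le_mul hyc hzc
    nlinarith
  have hbul : ∀ n : ℕ, acmBullet a b (c ^ n) (Multiset.replicate n c) := by
    intro n
    refine ⟨?_, ⟨1, Or.inl rfl, ?_⟩, ?_⟩
    · intro u hu; rw [Multiset.eq_of_mem_replicate hu]; exact hatom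
    · rw [Multiset.prod_replicate, mul_one]
    · rintro t hle hne ⟨k, hkmem, hkeq⟩
      have hall : ∀ u ∈ t, u = c := fun u hu =>
        Multiset.eq_of_mem_replicate (Multiset.mem_of_le hle hu)
      have ht : t = Multiset.replicate (Multiset.card t) c :=
        (Multiset.eq_replicate_card).mpr hall
      have hcard : Multiset.card t < n := by
        have h2 := Multiset.card_le_card hle
        rw [Multiset.card_replicate] at h2
        rcases lt_or_eq_of_le h2 with h' | h'
        · exact h'
        · exact absurd (by rw [ht, h']) hne
      rw [ht, Multiset.prod_replicate] at hkeq
      have hk1 : 1 ≤ k := acm_one_le' ha hkmem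
      have hlt : c ^ Multiset.card t < c ^ n := Nat.pow_lt_pow_right hc2 hcard
      have hle2 : c ^ n ≤ c ^ n * k := Nat.le_mul_of_pos_right _ hk1
      omega
  have homega : ∀ n : ℕ, (n : ℕ∞) ≤ acmOmega a b (c ^ n) := by
    intro n
    exact le_sSup ⟨Multiset.replicate n c, hbul n, by simp⟩
  by_contra htop
  obtain ⟨m, hm⟩ := WithTop.ne_top_iff_exists.mp htop
  have h1 : ((m + 1 : ℕ) : ℕ∞) ≤ ⨆ x ∈ {x : ℕ | acmMem a b x}, acmOmega a b x :=
    le_trans (homega (m + 1)) (le_biSup _ (acm_pow' ha hacm hcmem (m + 1)))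
  rw [← hm] at h1
  have h2 : m + 1 ≤ m := Nat.cast_le.mp h1
  omega
end

section
/- Let M_{1,b} be a regular ACM and let x ∈ M_{1,b} be irreducible in M_{1,b}. If x = a₁a₂⋯a_n is the prime factorization of x in ℤ (counting multiplicity), then n ≤ φ(b), where φ is Euler's totient function. -/
lemma acmMem_one_iff {b m : ℕ} (hm : m ≠ 0) : acmMem 1 b m ↔ m ≡ 1 [MOD b] := by
  refine ⟨?_, fun h => ?_⟩
  · rintro (rfl | ⟨k, rfl⟩)
    · rfl
    · simp [Nat.ModEq, Nat.add_mul_mod_self_right]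
  · obtain ⟨k, hk⟩ := (Nat.modEq_iff_dvd' (Nat.one_le_iff_ne_zero.2 hm)).1 h.symm
    exact Or.inr ⟨k, by rw [mul_comm]; omega⟩

lemma List.prod_ne_one_of_prime {l : List ℕ} (hl : l ≠ []) (hprime : ∀ p ∈ l, p.Prime) :
    l.prod ≠ 1 := by
  obtain ⟨p, hp⟩ := List.exists_mem_of_ne_nil l hl
  intro h
  exact (hprime p hp).not_dvd_one (h ▸ List.dvd_prod hp)

lemma List.exists_prefix_prod_modEq {b : ℕ} (hb : 0 < b) {L : List ℕ}
    (hL : ∀ p ∈ L, p.Coprime b) :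
    ∃ i j, i < j ∧ j ≤ b.totient ∧ (L.take i).prod ≡ (L.take j).prod [MOD b] := by
  have hmaps : Set.MapsTo (fun i => (L.take i).prod % b) (Finset.range (b.totient + 1))
      (({a ∈ Finset.range b | b.Coprime a} : Finset ℕ) : Set ℕ) := by
    intro i _
    have hcop : (L.take i).prod.Coprime b :=
      Nat.coprime_list_prod_left_iff.2 fun p hp => hL p (List.mem_of_mem_take hp)
    rw [Finset.mem_coe, Finset.mem_filter, Finset.mem_range]
    exact ⟨Nat.mod_lt _ hb, by rw [Nat.Coprime, Nat.gcd_comm, ← Nat.gcd_rec]; exact hcop.symm⟩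
  obtain ⟨i, hi, j, hj, hij, heq⟩ := Finset.exists_ne_map_eq_of_card_lt_of_maps_to
    (by rw [Finset.card_range, ← Nat.totient_eq_card_coprime]; exact Nat.lt_succ_self _) hmaps
  rw [Finset.mem_range] at hi hj
  rcases hij.lt_or_gt with h | h
  · exact ⟨i, j, h, by omega, heq⟩
  · exact ⟨j, i, h, by omega, heq.symm⟩

lemma List.exists_split_prod_modEq_one {b : ℕ} (hb : 0 < b) {L : List ℕ}
    (hL : ∀ p ∈ L, p.Coprime b) (hlen : b.totient < L.length) :
    ∃ l₁ l₂ l₃, L = l₁ ++ l₂ ++ l₃ ∧ l₂ ≠ [] ∧ l₃ ≠ [] ∧ l₂.prod ≡ 1 [MOD b] := by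
  obtain ⟨i, j, hij, hj, hmod⟩ := L.exists_prefix_prod_modEq hb hL
  have htake : L.take j = L.take i ++ (L.drop i).take (j - i) := by
    rw [← List.take_add, Nat.add_sub_cancel' hij.le]
  refine ⟨L.take i, (L.drop i).take (j - i), L.drop j, ?_, ?_, ?_, ?_⟩
  · rw [← htake, List.take_append_drop]
  · simp only [ne_eq, List.take_eq_nil_iff, List.drop_eq_nil_iff]
    omega
  · simp only [ne_eq, List.drop_eq_nil_iff]
    omega
  · have hcop : (L.take i).prod.Coprime b :=
      Nat.coprime_list_prod_left_iff.2 fun p hp => hL p (List.mem_of_mem_take hp)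
    refine Nat.ModEq.cancel_left_of_coprime (c := (L.take i).prod) hcop.symm ?_
    rw [mul_one, ← List.prod_append, ← htake]
    exact hmod.symm

/-- If `x` is irreducible in the regular ACM `M_{1,b}`, then the number of
prime factors of `x` in `ℤ` (with multiplicity) is at most `φ(b)`. -/
theorem regular_atom_prime_length (b : ℕ) (hb : 0 < b) (x : ℕ)
    (hx : acmAtom 1 b x) :
    x.primeFactorsList.length ≤ Nat.totient b := by
  obtain ⟨hmem, -, hirred⟩ := hx
  have hx0 : x ≠ 0 := by rcases hmem with h | ⟨k, h⟩ <;> omega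
  have hxb : x ≡ 1 [MOD b] := (acmMem_one_iff hx0).1 hmem
  have hcop : ∀ p ∈ x.primeFactorsList, p.Coprime b := fun p hp =>
    Nat.Coprime.coprime_dvd_left (Nat.dvd_of_mem_primeFactorsList hp) (by simpa using hxb.gcd_eq)
  by_contra! hlen
  obtain ⟨l₁, l₂, l₃, hL, hl₂, hl₃, hl₂b⟩ := List.exists_split_prod_modEq_one hb hcop hlen
  have hprime (p) (hp : p ∈ l₁ ++ l₂ ++ l₃) : p.Prime :=
    Nat.prime_of_mem_primeFactorsList (hL ▸ hp)
  have hsplit : x = l₂.prod * (l₁.prod * l₃.prod) := by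
    rw [← Nat.prod_primeFactorsList hx0, hL, List.prod_append, List.prod_append]
    ring
  have hrestb : l₁.prod * l₃.prod ≡ 1 [MOD b] := by
    simpa using (hl₂b.mul_right (l₁.prod * l₃.prod)).symm.trans (hsplit ▸ hxb)
  have hx0' : l₂.prod * (l₁.prod * l₃.prod) ≠ 0 := hsplit ▸ hx0
  rcases hirred _ _ ((acmMem_one_iff (left_ne_zero_of_mul hx0')).2 hl₂b)
      ((acmMem_one_iff (right_ne_zero_of_mul hx0')).2 hrestb) hsplit with h | h
  · exact List.prod_ne_one_of_prime hl₂ (fun p hp => hprime p (by simp [hp])) h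
  · exact List.prod_ne_one_of_prime hl₃ (fun p hp => hprime p (by simp [hp]))
      (Nat.eq_one_of_mul_eq_one_left h)
end

section
/- Let b = p₁^{a₁}⋯p_n^{a_n} with n ≥ 2 distinct primes and a_i ≥ 1. In the ACM M_{b,b}, for every element of the form b^k·m with k ≥ 2 and b ∤ m, and every integer c with 2 ≤ c ≤ k, there exists a factorization of b^k·m into exactly c irreducibles of M_{b,b}. Consequently LD(M_{b,b}) = 1. -/
/-!
Since `b ≡ 0 (mod b)`, the monoid `M_{b,b}` consists of `1` and the positive multiples of `b`,
and its atoms are the multiples of `b` not divisible by `b²`; so every factorization of `x` has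
length at most the exponent `K` of the largest power of `b` dividing `x`. Conversely, if `p ≠ q`
are primes dividing `b`, splitting `N ≠ 0` into its `p`-part and `p`-free part writes
`N = t₁ t₂` with `b ∤ t₁` (no factor `q`) and `b ∤ t₂` (no factor `p`), whence
`b^c N = b^(c-2) · (b t₁) · (b t₂)` is a factorization of length `c` for each `c ≥ 2`.
Hence an element with two distinct lengths has length set exactly `[2, K]` with `K ≥ 3`,
and its length density is `(K - 2) / (K - 2) = 1`.
-/

lemma two_le_of_two_le_card_primeFactors {b : ℕ} (hb : 2 ≤ b.primeFactors.card) : 2 ≤ b := by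
  by_contra h
  interval_cases b <;> simp_all

lemma acmMem_iff {b x : ℕ} (hb : 0 < b) : acmMem b b x ↔ x = 1 ∨ x ≠ 0 ∧ b ∣ x := by
  constructor
  · rintro (rfl | ⟨k, rfl⟩)
    · exact Or.inl rfl
    · exact Or.inr ⟨by positivity, ⟨k + 1, by ring⟩⟩
  · rintro (rfl | ⟨hx0, j, rfl⟩)
    · exact Or.inl rfl
    · obtain ⟨t, rfl⟩ : ∃ t, j = t + 1 :=
        Nat.exists_eq_succ_of_ne_zero (right_ne_zero_of_mul hx0)
      exact Or.inr ⟨t, by ring⟩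

lemma acmAtom_iff {b x : ℕ} (hb : 2 ≤ b) :
    acmAtom b b x ↔ x ≠ 0 ∧ b ∣ x ∧ ¬ b * b ∣ x := by
  have hb0 : 0 < b := by omega
  constructor
  · rintro ⟨hmem, hx1, hirr⟩
    obtain ⟨hx0, hbx⟩ := ((acmMem_iff hb0).mp hmem).resolve_left hx1
    refine ⟨hx0, hbx, ?_⟩
    rintro ⟨t, rfl⟩
    have ht : t ≠ 0 := by rintro rfl; simp at hx0
    rcases hirr b (b * t) ((acmMem_iff hb0).mpr (Or.inr ⟨hb0.ne', dvd_rfl⟩))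
      ((acmMem_iff hb0).mpr (Or.inr ⟨mul_ne_zero hb0.ne' ht, dvd_mul_right b t⟩))
      (mul_assoc b b t) with h | h
    · omega
    · exact absurd (Nat.eq_one_of_mul_eq_one_right h) (by omega)
  · rintro ⟨hx0, hbx, hnb2⟩
    refine ⟨(acmMem_iff hb0).mpr (Or.inr ⟨hx0, hbx⟩), ?_, ?_⟩
    · rintro rfl
      exact absurd (Nat.le_of_dvd one_pos hbx) (by omega)
    · intro y z hy hz hxyz
      rcases (acmMem_iff hb0).mp hy with rfl | ⟨-, hby⟩
      · exact Or.inl rfl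
      rcases (acmMem_iff hb0).mp hz with rfl | ⟨-, hbz⟩
      · exact Or.inr rfl
      exact absurd (hxyz ▸ mul_dvd_mul hby hbz) hnb2

lemma acmAtom_mul_of_not_dvd {b t : ℕ} (hb : 2 ≤ b) (ht : t ≠ 0) (hbt : ¬ b ∣ t) :
    acmAtom b b (b * t) :=
  (acmAtom_iff hb).mpr ⟨mul_ne_zero (by omega) ht, dvd_mul_right b t,
    fun h => hbt ((Nat.mul_dvd_mul_iff_left (by omega)).mp h)⟩

lemma exists_mul_eq_not_dvd {b N : ℕ} (hb : 2 ≤ b.primeFactors.card) (hN : N ≠ 0) :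
    ∃ t₁ t₂, t₁ * t₂ = N ∧ ¬ b ∣ t₁ ∧ ¬ b ∣ t₂ := by
  obtain ⟨p, hp, q, hq, hpq⟩ := Finset.one_lt_card.mp hb
  have hpp := Nat.prime_of_mem_primeFactors hp
  have hqp := Nat.prime_of_mem_primeFactors hq
  refine ⟨ordProj[p] N, ordCompl[p] N, Nat.ordProj_mul_ordCompl_eq_self N p, fun h => ?_,
    fun h => Nat.not_dvd_ordCompl hpp hN ((Nat.dvd_of_mem_primeFactors hp).trans h)⟩
  have hqp' : q ∣ p := hqp.dvd_of_dvd_pow ((Nat.dvd_of_mem_primeFactors hq).trans h)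
  exact hpq ((Nat.prime_dvd_prime_iff_eq hqp hpp).mp hqp').symm

lemma exists_acmFactorization_card_eq {b N c : ℕ} (hb : 2 ≤ b.primeFactors.card)
    (hN : N ≠ 0) (hc : 2 ≤ c) :
    ∃ s, acmFactorization b b (b ^ c * N) s ∧ Multiset.card s = c := by
  have hb2 := two_le_of_two_le_card_primeFactors hb
  obtain ⟨t₁, t₂, rfl, ht₁, ht₂⟩ := exists_mul_eq_not_dvd hb hN
  have hb_atom : acmAtom b b b := by
    simpa using acmAtom_mul_of_not_dvd hb2 one_ne_zero (Nat.dvd_one.not.mpr (by omega))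
  have ht₁_atom := acmAtom_mul_of_not_dvd hb2 (left_ne_zero_of_mul hN) ht₁
  have ht₂_atom := acmAtom_mul_of_not_dvd hb2 (right_ne_zero_of_mul hN) ht₂
  refine ⟨b * t₁ ::ₘ b * t₂ ::ₘ Multiset.replicate (c - 2) b, ⟨?_, ?_⟩, ?_⟩
  · simp only [Multiset.mem_cons, Multiset.mem_replicate]
    rintro u (rfl | rfl | ⟨-, rfl⟩) <;> assumption
  · obtain ⟨d, rfl⟩ := Nat.exists_eq_add_of_le' hc
    simp only [Multiset.prod_cons, Multiset.prod_replicate, Nat.add_sub_cancel]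
    ring
  · simp only [Multiset.card_cons, Multiset.card_replicate]
    omega

lemma pow_card_dvd_of_acmFactorization {b x : ℕ} {s : Multiset ℕ} (hb : 2 ≤ b)
    (hs : acmFactorization b b x s) : b ^ Multiset.card s ∣ x := by
  obtain ⟨hatoms, rfl⟩ := hs
  simpa using Multiset.prod_dvd_prod_of_dvd (fun _ => b) id
    fun u hu => ((acmAtom_iff hb).mp (hatoms u hu)).2.1

lemma acmFactorization_one {b : ℕ} {s : Multiset ℕ} (hs : acmFactorization b b 1 s) :
    s = 0 :=
  Multiset.eq_zero_of_forall_notMem fun u hu =>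
    (hs.1 u hu).2.1 (Nat.eq_one_of_dvd_one (hs.2 ▸ Multiset.dvd_prod hu))

lemma card_pos_of_acmFactorization {b x : ℕ} {s : Multiset ℕ} (hx : x ≠ 1)
    (hs : acmFactorization b b x s) : 0 < Multiset.card s :=
  Multiset.card_pos.mpr fun h => hx (by rw [← hs.2, h, Multiset.prod_zero])

lemma card_ne_one_of_acmFactorization {b x : ℕ} {s : Multiset ℕ} (hb : 2 ≤ b)
    (hx : b * b ∣ x) (hs : acmFactorization b b x s) : Multiset.card s ≠ 1 := by
  intro h
  obtain ⟨u, rfl⟩ := Multiset.card_eq_one.mp h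
  rw [← hs.2, Multiset.prod_singleton] at hx
  exact ((acmAtom_iff hb).mp (hs.1 u (Multiset.mem_singleton_self u))).2.2 hx

lemma acmLengthSet_bddAbove {b x : ℕ} (hb : 2 ≤ b) (hx : x ≠ 0) :
    BddAbove (acmLengthSet b b x) := by
  refine ⟨x, ?_⟩
  rintro _ ⟨s, hs, rfl⟩
  exact (Nat.lt_pow_self hb).le.trans
    (Nat.le_of_dvd (Nat.pos_of_ne_zero hx) (pow_card_dvd_of_acmFactorization hb hs))

lemma Icc_subset_acmLengthSet {b x K : ℕ} (hb : 2 ≤ b.primeFactors.card) (hx : x ≠ 0)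
    (hK : b ^ K ∣ x) : Set.Icc 2 K ⊆ acmLengthSet b b x := by
  obtain ⟨m, rfl⟩ := hK
  rintro n ⟨h2n, hnK⟩
  obtain ⟨t, ht, htn⟩ := exists_acmFactorization_card_eq hb
    (N := b ^ (K - n) * m)
    (mul_ne_zero (pow_ne_zero _ (by rintro rfl; simp at hb)) (right_ne_zero_of_mul hx)) h2n
  refine ⟨t, ?_, htn⟩
  rwa [← mul_assoc, ← pow_add, Nat.add_sub_cancel' hnK] at ht

lemma acmLengthSet_eq_Icc {b x : ℕ} (hb : 2 ≤ b.primeFactors.card) (hx : acmLI b b x) :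
    ∃ K, 3 ≤ K ∧ acmLengthSet b b x = Set.Icc 2 K := by
  have hb2 := two_le_of_two_le_card_primeFactors hb
  obtain ⟨c₁, ⟨s₁, hs₁, rfl⟩, c₂, ⟨s₂, hs₂, rfl⟩, hne⟩ := hx
  have hx1 : x ≠ 1 := by
    rintro rfl
    simp [acmFactorization_one hs₁, acmFactorization_one hs₂] at hne
  have hx0 : x ≠ 0 :=
    hs₁.2 ▸ Multiset.prod_ne_zero fun h => ((acmAtom_iff hb2).mp (hs₁.1 0 h)).1 rfl
  have hbdd := acmLengthSet_bddAbove hb2 hx0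
  obtain ⟨K, hK⟩ : ∃ K, sSup (acmLengthSet b b x) = K := ⟨_, rfl⟩
  have hc₁K : Multiset.card s₁ ≤ K := hK ▸ le_csSup hbdd ⟨s₁, hs₁, rfl⟩
  have hc₂K : Multiset.card s₂ ≤ K := hK ▸ le_csSup hbdd ⟨s₂, hs₂, rfl⟩
  obtain ⟨s, hs, hsK⟩ : K ∈ acmLengthSet b b x := hK ▸ Nat.sSup_mem ⟨_, s₁, hs₁, rfl⟩ hbdd
  have hbK : b ^ K ∣ x := hsK ▸ pow_card_dvd_of_acmFactorization hb2 hs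
  have h₁ := card_pos_of_acmFactorization hx1 hs₁
  have h₂ := card_pos_of_acmFactorization hx1 hs₂
  have hbb : b * b ∣ x := (sq b ▸ pow_dvd_pow b (by omega) : b * b ∣ b ^ K).trans hbK
  have h₁' := card_ne_one_of_acmFactorization hb2 hbb hs₁
  have h₂' := card_ne_one_of_acmFactorization hb2 hbb hs₂
  refine ⟨K, by omega, (Set.Subset.antisymm ?_ (Icc_subset_acmLengthSet hb hx0 hbK))⟩
  rintro _ hn
  obtain ⟨t, ht, rfl⟩ := id hn
  exact ⟨(Nat.two_le_iff _).mpr ⟨(card_pos_of_acmFactorization hx1 ht).ne',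
    card_ne_one_of_acmFactorization hb2 hbb ht⟩, hK ▸ le_csSup hbdd hn⟩

lemma acmLD_eq_one {b x : ℕ} (hb : 2 ≤ b.primeFactors.card) (hx : acmLI b b x) :
    acmLD b b x = 1 := by
  obtain ⟨K, hK, hset⟩ := acmLengthSet_eq_Icc hb hx
  obtain ⟨k, rfl⟩ : ∃ k, K = k + 3 := ⟨K - 3, by omega⟩
  have hcard : (Set.Icc 2 (k + 3)).ncard = k + 2 := by
    rw [← Finset.coe_Icc, Set.ncard_coe_finset, Nat.card_Icc]
    omega
  rw [acmLD, hset, hcard, csSup_Icc (by omega), csInf_Icc (by omega)]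
  push_cast
  rw [div_eq_one_iff_eq (by linarith)]
  ring

/-- For `b` with at least two distinct prime factors, every `b^k·m ∈ M_{b,b}`
with `k ≥ 2`, `b ∤ m` has a factorization into exactly `c` irreducibles for each
`2 ≤ c ≤ k`; consequently `LD(M_{b,b}) = 1`. -/
theorem Mbb_length_density (b : ℕ) (hb : 2 ≤ b.primeFactors.card) :
    (∀ k m c : ℕ, 2 ≤ k → ¬ b ∣ m → 2 ≤ c → c ≤ k →
      ∃ s : Multiset ℕ, acmFactorization b b (b ^ k * m) s ∧ Multiset.card s = c) ∧
    sInf {r : ℝ | ∃ x : ℕ, acmMem b b x ∧ acmLI b b x ∧ r = acmLD b b x} = 1 := by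
  have hb0 : b ≠ 0 := by rintro rfl; simp at hb
  refine ⟨fun k m c _ hbm hc hck => ?_, ?_⟩
  · have hm : m ≠ 0 := by rintro rfl; exact hbm (dvd_zero b)
    exact Icc_subset_acmLengthSet hb (mul_ne_zero (pow_ne_zero k hb0) hm)
      (dvd_mul_right _ m) ⟨hc, hck⟩
  · have hmem : acmMem b b (b ^ 3) := (acmMem_iff (Nat.pos_of_ne_zero hb0)).mpr
      (Or.inr ⟨pow_ne_zero 3 hb0, dvd_pow_self b three_ne_zero⟩)
    have hLI : acmLI b b (b ^ 3) := by
      have h := Icc_subset_acmLengthSet hb (pow_ne_zero 3 hb0) dvd_rfl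
      exact ⟨2, h ⟨le_rfl, by norm_num⟩, 3, h ⟨by norm_num, le_rfl⟩, by norm_num⟩
    have hset : {r : ℝ | ∃ x : ℕ, acmMem b b x ∧ acmLI b b x ∧ r = acmLD b b x} = {1} :=
      Set.eq_singleton_iff_unique_mem.mpr ⟨⟨b ^ 3, hmem, hLI, (acmLD_eq_one hb hLI).symm⟩,
        fun r ⟨_, _, hx, hr⟩ => hr ▸ acmLD_eq_one hb hx⟩
    rw [hset, csInf_singleton]
end

section
/- Let M = M_{p,bp} be a local singular ACM with α = β = 1. Then M is half-factorial: for every x ∈ M, all factorizations of x into atoms of M have the same length, namely v_p(x). -/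
lemma acm_b_dvd (p b : ℕ) (hp : p.Prime) (hacm : p * p ≡ p [MOD b * p]) : b ∣ p - 1 := by
  have h : b * p ∣ p * p - p :=
    (Nat.modEq_iff_dvd' (Nat.le_mul_of_pos_left p hp.pos)).mp hacm.symm
  obtain ⟨m, hm⟩ := h
  have hppos := hp.pos
  obtain ⟨q, hq⟩ : ∃ q, p = q + 1 := ⟨p - 1, by omega⟩
  subst hq
  have h2 : (q + 1) * (q + 1) = (q + 1) * q + (q + 1) := by ring
  have h3 : b * (q + 1) * m = (q + 1) * (b * m) := by ring
  have key : (q + 1) * q = (q + 1) * (b * m) := by omega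
  have : q = b * m := Nat.eq_of_mul_eq_mul_left (by omega) key
  exact ⟨m, by omega⟩

lemma acm_atom_pos (p b u : ℕ) (hp : p.Prime) (hu : acmAtom p (b * p) u) : 0 < u := by
  obtain ⟨hmem, hne1, _⟩ := hu
  rcases hmem with h1 | ⟨k, hk⟩
  · omega
  · have := hp.pos; omega

lemma acm_atom_vp (p b u : ℕ) (hp : p.Prime) (hb : 0 < b) (hbd : b ∣ p - 1)
    (hu : acmAtom p (b * p) u) : u.factorization p = 1 := by
  obtain ⟨hmem, hne1, hirr⟩ := hu
  rcases hmem with h1 | ⟨k, hk⟩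
  · exact absurd h1 hne1
  have hup : u = p * (1 + k * b) := by rw [hk]; ring
  set t := 1 + k * b with ht
  by_cases hpt : p ∣ t
  · exfalso
    obtain ⟨s, hs⟩ := hpt
    have hspos : 0 < s := by
      rcases Nat.eq_zero_or_pos s with h | h
      · simp [h] at hs; omega
      · exact h
    -- p ≡ 1 [MOD b]
    have hp1 : (1 : ℕ) ≡ p [MOD b] := (Nat.modEq_iff_dvd' hp.one_le).mpr hbd
    have ht1 : t ≡ 1 [MOD b] := by
      show t % b = 1 % b
      rw [ht, Nat.add_mul_mod_self_right]
    have hs1 : (1 : ℕ) ≡ s [MOD b] := by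
      have h4 := hp1.mul_right s
      rw [one_mul] at h4
      exact ((h4.trans (hs ▸ ht1))).symm
    have hbs : b ∣ s - 1 := (Nat.modEq_iff_dvd' hspos).mp hs1
    obtain ⟨j, hj⟩ := hbs
    have hjc : b * j = j * b := Nat.mul_comm b j
    have hsval : s = 1 + j * b := by omega
    have hmem1 : acmMem p (b * p) p := Or.inr ⟨0, by ring⟩
    have hmem2 : acmMem p (b * p) (p * s) := Or.inr ⟨j, by rw [hsval]; ring⟩
    have heq : u = p * (p * s) := by rw [hup, hs]
    rcases hirr p (p * s) hmem1 hmem2 heq with h | h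
    · exact hp.one_lt.ne' h
    · have := hp.one_lt
      nlinarith
  · have htpos : 0 < t := by omega
    rw [hup, Nat.factorization_mul hp.pos.ne' htpos.ne']
    simp [hp.factorization, Nat.factorization_eq_zero_of_not_dvd hpt]

/-- The local singular ACM `M = M_{p, bp}` (with `α = β = 1`) is
half-factorial: every factorization of `x` into atoms has length `v_p(x)`. -/
theorem local_half_factorial (p b : ℕ) (hp : p.Prime) (hb : 0 < b)
    (hacm : p * p ≡ p [MOD b * p]) :
    ∀ x : ℕ, acmMem p (b * p) x → ∀ s : Multiset ℕ,
      acmFactorization p (b * p) x s → Multiset.card s = x.factorization p := by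
  have hbd := acm_b_dvd p b hp hacm
  intro x hxmem s hfs
  clear hxmem
  obtain ⟨hatoms, hprod⟩ := hfs
  subst hprod
  induction s using Multiset.induction with
  | empty => simp
  | cons a s ih =>
    have ha := hatoms a (Multiset.mem_cons_self a s)
    have hs : ∀ u ∈ s, acmAtom p (b * p) u := fun u hu => hatoms u (Multiset.mem_cons_of_mem hu)
    have hapos := acm_atom_pos p b a hp ha
    have hsppos : 0 < s.prod :=
      Multiset.prod_pos (fun u hu => acm_atom_pos p b u hp (hs u hu))
    rw [Multiset.card_cons, Multiset.prod_cons,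
      Nat.factorization_mul hapos.ne' hsppos.ne', Finsupp.add_apply,
      acm_atom_vp p b a hp hb hbd ha, ih hs]
    omega
end

section
/- Let M = M_{p,bp} be a local singular ACM with α = β = 1. Then the catenary degree of M is 2. -/
/-!
Since `p ≡ 1 (mod b)`, the atoms of `M_{p,bp}` are the numbers `p * c` with `p ∤ c` and
`c ≡ 1 (mod b)`, and such cofactors are closed under multiplication. Hence exchanging two atoms
`p * c, p * c'` of a factorization for `p, p * (c * c')` is a move of distance `2`, and repeating
it carries every factorization of `x` to `p * C, p, …, p`; this normal form is unique because the
number of atoms is the `p`-adic valuation of `x`. So `c(M) ≤ 2`. Conversely, two distinct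
factorizations of one element are never at distance `≤ 1`, while with `q = 1 + b * p` the element
`p * (p * q²) = (p * q)²` has two of them.
-/

open Multiset Relation

lemma facDist_comm (s t : Multiset ℕ) : facDist s t = facDist t s := max_comm _ _

lemma facDist_add_right (s t r : Multiset ℕ) : facDist (s + r) (t + r) = facDist s t := by
  simp only [facDist, add_tsub_add_eq_tsub_right]

lemma facDist_cons (u : ℕ) (s t : Multiset ℕ) : facDist (u ::ₘ s) (u ::ₘ t) = facDist s t := by
  simp only [facDist, ← singleton_add, add_tsub_add_eq_tsub_left]

lemma facDist_le_max_card (s t : Multiset ℕ) : facDist s t ≤ max (card s) (card t) :=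
  max_le_max (card_le_card tsub_le_self) (card_le_card tsub_le_self)

lemma eq_of_prod_eq_of_card_le_one {s t : Multiset ℕ} (hs : ∀ u ∈ s, 1 < u)
    (ht : ∀ u ∈ t, 1 < u) (hs₁ : card s ≤ 1) (ht₁ : card t ≤ 1) (hprod : s.prod = t.prod) :
    s = t := by
  rcases Nat.le_one_iff_eq_zero_or_eq_one.mp hs₁ with h | h <;>
  rcases Nat.le_one_iff_eq_zero_or_eq_one.mp ht₁ with h' | h' <;>
  simp only [card_eq_zero, card_eq_one] at h h' <;>
  (try obtain ⟨u, rfl⟩ := h) <;> (try obtain ⟨v, rfl⟩ := h') <;>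
  simp_all

lemma eq_of_prod_eq_of_facDist_le_one {s t : Multiset ℕ} (hs : ∀ u ∈ s, 1 < u)
    (ht : ∀ u ∈ t, 1 < u) (hprod : s.prod = t.prod) (hd : facDist s t ≤ 1) : s = t := by
  have hcommon : 0 < (s ∩ t).prod :=
    Nat.pos_of_ne_zero <| prod_ne_zero fun h => by
      have := hs 0 (mem_of_le inter_le_left h); omega
  have hdiff : (s - t).prod = (t - s).prod := by
    apply Nat.eq_of_mul_eq_mul_right hcommon
    rw [← prod_add, ← prod_add, sub_add_inter, inter_comm, sub_add_inter, hprod]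
  have hsub : s - t = t - s :=
    eq_of_prod_eq_of_card_le_one (fun u hu => hs u (mem_of_le tsub_le_self hu))
      (fun u hu => ht u (mem_of_le tsub_le_self hu)) ((le_max_left _ _).trans hd)
      ((le_max_right _ _).trans hd) hdiff
  ext a
  have := congrArg (count a) hsub
  simp only [count_sub] at this
  omega

lemma acmAtom.one_lt {a q u : ℕ} (hu : acmAtom a q u) : 1 < u := by
  obtain ⟨hmem, hne, hirr⟩ := hu
  by_contra h
  obtain rfl : u = 0 := by omega
  simpa using hirr 0 0 hmem hmem rfl

lemma acmFactorization.eq_zero_iff {a q x : ℕ} {z : Multiset ℕ}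
    (hz : acmFactorization a q x z) : z = 0 ↔ x = 1 := by
  rw [← hz.2]
  refine ⟨fun h => by rw [h, prod_zero], fun h => eq_zero_of_forall_notMem fun u hu => ?_⟩
  have hu1 : u = 1 := Nat.dvd_one.mp (h ▸ dvd_prod hu)
  exact (hz.1 u hu).2.1 hu1

lemma acmFactorization.cons {a q x u : ℕ} {s : Multiset ℕ} (hu : acmAtom a q u)
    (hs : acmFactorization a q x s) : acmFactorization a q (u * x) (u ::ₘ s) := by
  refine ⟨fun w hw => ?_, by rw [prod_cons, hs.2]⟩
  rcases mem_cons.mp hw with rfl | hw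
  exacts [hu, hs.1 w hw]

lemma acmNChain.eq_of_le_one {a q x N : ℕ} {z₁ z₂ : Multiset ℕ}
    (h : acmNChain a q x N z₁ z₂) (hN : N ≤ 1) : z₁ = z₂ := by
  obtain ⟨L, hne, hhead, hlast, hfac, hchain⟩ := h
  have hEq : L.IsChain (· = ·) := hchain.imp_of_mem_imp fun s t hs ht hd =>
    eq_of_prod_eq_of_facDist_le_one (fun u hu => ((hfac s hs).1 u hu).one_lt)
      (fun u hu => ((hfac t ht).1 u hu).one_lt) ((hfac s hs).2.trans (hfac t ht).2.symm)
      (hd.trans hN)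
  have := hEq.induction (· = L.head hne) L (fun _ _ hxy hx => hxy ▸ hx) (fun _ => rfl) _
    (L.getLast_mem hne)
  rw [List.head?_eq_some_head hne] at hhead
  rw [List.getLast?_eq_some_getLast hne] at hlast
  simp_all

def acmFacStep (a q x N : ℕ) (s t : Multiset ℕ) : Prop :=
  acmFactorization a q x s ∧ acmFactorization a q x t ∧ facDist s t ≤ N

instance (a q x N : ℕ) : Std.Symm (acmFacStep a q x N) where
  symm _ _ h := ⟨h.2.1, h.1, facDist_comm _ _ ▸ h.2.2⟩

lemma acmFacStep.cons {a q x N u : ℕ} {s t : Multiset ℕ} (hu : acmAtom a q u)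
    (h : acmFacStep a q x N s t) : acmFacStep a q (u * x) N (u ::ₘ s) (u ::ₘ t) :=
  ⟨h.1.cons hu, h.2.1.cons hu, facDist_cons u s t ▸ h.2.2⟩

lemma acmFacStep_of_mul_eq {a q x u v u' v' : ℕ} {r : Multiset ℕ}
    (hs : acmFactorization a q x (u ::ₘ v ::ₘ r)) (hu' : acmAtom a q u') (hv' : acmAtom a q v')
    (huv : u * v = u' * v') : acmFacStep a q x 2 (u ::ₘ v ::ₘ r) (u' ::ₘ v' ::ₘ r) := by
  refine ⟨hs, ⟨fun w hw => ?_, ?_⟩, ?_⟩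
  · rcases mem_cons.mp hw with rfl | hw
    · exact hu'
    rcases mem_cons.mp hw with rfl | hw
    · exact hv'
    · exact hs.1 w (mem_cons_of_mem (mem_cons_of_mem hw))
  · rw [← hs.2, prod_cons, prod_cons, prod_cons, prod_cons, ← mul_assoc, ← mul_assoc, huv]
  · have hpair : ∀ w w' : ℕ, w ::ₘ w' ::ₘ r = {w, w'} + r := fun w w' => by simp
    rw [hpair, hpair, facDist_add_right]
    exact (facDist_le_max_card _ _).trans (by simp)

lemma acmFactorization_of_reflTransGen {a q x N : ℕ} {s t : Multiset ℕ}
    (h : ReflTransGen (acmFacStep a q x N) s t) (hs : acmFactorization a q x s) :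
    acmFactorization a q x t := by
  induction h with
  | refl => exact hs
  | tail _ hstep _ => exact hstep.2.1

lemma acmNChain_of_reflTransGen {a q x N : ℕ} {z₁ z₂ : Multiset ℕ}
    (h : ReflTransGen (acmFacStep a q x N) z₁ z₂) (hz₁ : acmFactorization a q x z₁) :
    acmNChain a q x N z₁ z₂ := by
  obtain ⟨L, hne, hchain, hhead, hlast⟩ := List.exists_isChain_ne_nil_of_relationReflTransGen h
  refine ⟨L, hne, by rw [List.head?_eq_some_head hne, hhead],
    by rw [List.getLast?_eq_some_getLast hne, hlast], ?_, hchain.imp fun _ _ hst => hst.2.2⟩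
  exact hchain.induction _ L (fun _ _ hst _ => hst.2.1) (fun _ => hhead ▸ hz₁)

section LocalACM

variable {p b : ℕ}

lemma modEq_one_of_mul_self_modEq (hp : p ≠ 0) (h : p * p ≡ p [MOD b * p]) : p ≡ 1 [MOD b] :=
  Nat.ModEq.mul_left_cancel' hp (by rwa [mul_one, mul_comm p b])

lemma acmMem_iff_eq_mul {x : ℕ} :
    acmMem p (b * p) x ↔ x = 1 ∨ ∃ m, 0 < m ∧ m ≡ 1 [MOD b] ∧ x = p * m := by
  refine or_congr Iff.rfl ⟨fun ⟨k, hk⟩ => ⟨1 + k * b, by omega, ?_, by rw [hk]; ring⟩, ?_⟩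
  · exact Nat.add_mul_mod_self_right 1 k b
  · rintro ⟨m, hm, hmb, rfl⟩
    obtain ⟨k, hk⟩ := (Nat.modEq_iff_dvd' hm).mp hmb.symm
    exact ⟨k, by rw [show m = 1 + b * k by omega]; ring⟩

lemma acmAtom_iff_eq_mul (hp : 1 < p) (hpb : p ≡ 1 [MOD b]) {x : ℕ} :
    acmAtom p (b * p) x ↔ ∃ c, ¬ p ∣ c ∧ c ≡ 1 [MOD b] ∧ x = p * c := by
  have hp_mem : acmMem p (b * p) p :=
    acmMem_iff_eq_mul.mpr (.inr ⟨1, one_pos, rfl, (mul_one p).symm⟩)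
  constructor
  · rintro ⟨hmem, hne, hirr⟩
    obtain ⟨m, hm, hmb, rfl⟩ := (acmMem_iff_eq_mul.mp hmem).resolve_left hne
    refine ⟨m, fun ⟨m', hm'⟩ => ?_, hmb, rfl⟩
    subst hm'
    have hm'b : m' ≡ 1 [MOD b] := by simpa using (hpb.mul_right m').symm.trans hmb
    have hm'_mem : acmMem p (b * p) (p * m') :=
      acmMem_iff_eq_mul.mpr (.inr ⟨m', Nat.pos_of_mul_pos_left hm, hm'b, rfl⟩)
    rcases hirr p (p * m') hp_mem hm'_mem rfl with h | h
    · omega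
    · exact hp.ne' (Nat.eq_one_of_mul_eq_one_right h)
  · rintro ⟨c, hc, hcb, rfl⟩
    have hc0 : 0 < c := Nat.pos_of_ne_zero fun h => hc (h ▸ dvd_zero p)
    refine ⟨acmMem_iff_eq_mul.mpr (.inr ⟨c, hc0, hcb, rfl⟩),
      fun h => hp.ne' (Nat.eq_one_of_mul_eq_one_right h), fun y z hy hz hyz => ?_⟩
    rcases acmMem_iff_eq_mul.mp hy with rfl | ⟨m₁, -, -, rfl⟩
    · exact .inl rfl
    rcases acmMem_iff_eq_mul.mp hz with rfl | ⟨m₂, -, -, rfl⟩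
    · exact .inr rfl
    refine absurd ⟨m₁ * m₂, Nat.eq_of_mul_eq_mul_left (by omega : 0 < p) ?_⟩ hc
    rw [hyz]; ring

lemma acmAtom_mul_iff (hp : 1 < p) (hpb : p ≡ 1 [MOD b]) {c : ℕ} :
    acmAtom p (b * p) (p * c) ↔ ¬ p ∣ c ∧ c ≡ 1 [MOD b] := by
  rw [acmAtom_iff_eq_mul hp hpb]
  constructor
  · rintro ⟨c', hc', hc'b, h⟩
    obtain rfl := Nat.eq_of_mul_eq_mul_left (by omega) h
    exact ⟨hc', hc'b⟩
  · exact fun ⟨hc, hcb⟩ => ⟨c, hc, hcb, rfl⟩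

lemma acmAtom_self (hp : 1 < p) (hpb : p ≡ 1 [MOD b]) : acmAtom p (b * p) p := by
  simpa using
    (acmAtom_mul_iff hp hpb (c := 1)).mpr ⟨fun h => by simp [Nat.dvd_one.mp h] at hp, rfl⟩

lemma acmAtom_mul_mul (hp : p.Prime) (hpb : p ≡ 1 [MOD b]) {c₁ c₂ : ℕ}
    (h₁ : acmAtom p (b * p) (p * c₁)) (h₂ : acmAtom p (b * p) (p * c₂)) :
    acmAtom p (b * p) (p * (c₁ * c₂)) := by
  rw [acmAtom_mul_iff hp.one_lt hpb] at *
  exact ⟨fun h => (hp.dvd_mul.mp h).elim h₁.1 h₂.1, by simpa using h₁.2.mul h₂.2⟩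

lemma exists_reflTransGen_cons_replicate (hp : p.Prime) (hpb : p ≡ 1 [MOD b])
    {s : Multiset ℕ} (hs : ∀ u ∈ s, acmAtom p (b * p) u) (hs₀ : s ≠ 0) :
    ∃ n c, ReflTransGen (acmFacStep p (b * p) s.prod 2) s (p * c ::ₘ replicate n p) := by
  induction s using Multiset.induction_on with
  | empty => exact absurd rfl hs₀
  | cons u s ih =>
    have hu := hs u (mem_cons_self u s)
    obtain ⟨c₀, -, -, rfl⟩ := (acmAtom_iff_eq_mul hp.one_lt hpb).mp hu
    have hs' : ∀ v ∈ s, acmAtom p (b * p) v := fun v hv => hs v (mem_cons_of_mem hv)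
    rcases eq_or_ne s 0 with rfl | hs'₀
    · exact ⟨0, c₀, by rw [replicate_zero]⟩
    obtain ⟨n, c, hpath⟩ := ih hs' hs'₀
    have hfac : acmFactorization p (b * p) s.prod (p * c ::ₘ replicate n p) :=
      acmFactorization_of_reflTransGen hpath ⟨hs', rfl⟩
    have hc := hfac.1 _ (mem_cons_self _ _)
    refine ⟨n + 1, c₀ * c, ?_⟩
    rw [prod_cons, replicate_succ]
    refine (hpath.lift (p * c₀ ::ₘ ·) fun _ _ h => h.cons hu).tail ?_
    exact acmFacStep_of_mul_eq (hfac.cons hu) (acmAtom_mul_mul hp hpb hu hc)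
      (acmAtom_self hp.one_lt hpb) (by ring)

lemma eq_of_acmFactorization_cons_replicate (hp : p.Prime) (hpb : p ≡ 1 [MOD b])
    {x n₁ n₂ c₁ c₂ : ℕ} (h₁ : acmFactorization p (b * p) x (p * c₁ ::ₘ replicate n₁ p))
    (h₂ : acmFactorization p (b * p) x (p * c₂ ::ₘ replicate n₂ p)) :
    p * c₁ ::ₘ replicate n₁ p = p * c₂ ::ₘ replicate n₂ p := by
  have hp0 : p ≠ 0 := hp.ne_zero
  have hc₁ := ((acmAtom_mul_iff hp.one_lt hpb).mp (h₁.1 _ (mem_cons_self _ _))).1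
  have hc₂ := ((acmAtom_mul_iff hp.one_lt hpb).mp (h₂.1 _ (mem_cons_self _ _))).1
  have hprod := h₁.2.trans h₂.2.symm
  simp only [prod_cons, prod_replicate] at hprod
  have hval : ∀ {n c : ℕ}, ¬ p ∣ c → padicValNat p (p * c * p ^ n) = n + 1 := fun {n c} hc => by
    have := Fact.mk hp
    have hc0 : c ≠ 0 := fun h => hc (h ▸ dvd_zero p)
    rw [padicValNat.mul (by positivity) (by positivity), padicValNat.mul hp0 hc0,
      padicValNat.self hp.one_lt, padicValNat.eq_zero_of_not_dvd hc, padicValNat.prime_pow]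
    omega
  obtain rfl : n₁ = n₂ := Nat.succ_injective ((hval hc₁).symm.trans (hprod ▸ hval hc₂))
  obtain rfl : c₁ = c₂ :=
    Nat.eq_of_mul_eq_mul_left (Nat.pos_of_ne_zero hp0)
      (Nat.eq_of_mul_eq_mul_right (by positivity) hprod)
  rfl

lemma two_mem_acmCatSet (hp : p.Prime) (hpb : p ≡ 1 [MOD b]) : 2 ∈ acmCatSet p (b * p) := by
  intro x _ z₁ z₂ h₁ h₂
  by_cases hx : x = 1
  · obtain rfl := h₁.eq_zero_iff.mpr hx
    obtain rfl := h₂.eq_zero_iff.mpr hx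
    exact acmNChain_of_reflTransGen .refl h₁
  obtain ⟨n₁, c₁, hpath₁⟩ :=
    exists_reflTransGen_cons_replicate hp hpb h₁.1 (h₁.eq_zero_iff.not.mpr hx)
  obtain ⟨n₂, c₂, hpath₂⟩ :=
    exists_reflTransGen_cons_replicate hp hpb h₂.1 (h₂.eq_zero_iff.not.mpr hx)
  rw [h₁.2] at hpath₁
  rw [h₂.2] at hpath₂
  have hcanon := eq_of_acmFactorization_cons_replicate hp hpb
    (acmFactorization_of_reflTransGen hpath₁ h₁) (acmFactorization_of_reflTransGen hpath₂ h₂)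
  exact acmNChain_of_reflTransGen (hpath₁.trans (hcanon ▸ Std.Symm.symm _ _ hpath₂)) h₁

lemma notMem_acmCatSet_of_le_one (hp : p.Prime) (hb : 0 < b) (hpb : p ≡ 1 [MOD b]) {N : ℕ}
    (hN : N ≤ 1) : N ∉ acmCatSet p (b * p) := by
  set q := 1 + b * p with hq_def
  have hbp : 0 < b * p := Nat.mul_pos hb hp.pos
  have hq : ¬ p ∣ q ∧ q ≡ 1 [MOD b] := by
    refine ⟨fun h => hp.one_lt.ne' (Nat.dvd_one.mp ?_), Nat.add_mul_mod_self_left 1 b p⟩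
    exact (Nat.dvd_add_left (dvd_mul_left p b)).mp h
  have hatom_q : acmAtom p (b * p) (p * q) := (acmAtom_mul_iff hp.one_lt hpb).mpr hq
  have hatom_qq := acmAtom_mul_mul hp hpb hatom_q hatom_q
  have hatom_p := acmAtom_self hp.one_lt hpb
  have hq₀ : 0 < q := by omega
  have hx : acmMem p (b * p) (p * (p * (q * q))) :=
    acmMem_iff_eq_mul.mpr (.inr ⟨p * (q * q), Nat.mul_pos hp.pos (Nat.mul_pos hq₀ hq₀),
      by simpa using hpb.mul (hq.2.mul hq.2), rfl⟩)
  have h₁ : acmFactorization p (b * p) (p * (p * (q * q))) {p, p * (q * q)} :=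
    ⟨by simp [hatom_p, hatom_qq], by simp⟩
  have h₂ : acmFactorization p (b * p) (p * (p * (q * q))) {p * q, p * q} :=
    ⟨by simp [hatom_q], by simp only [insert_eq_cons, prod_cons, prod_singleton]; ring⟩
  intro hcat
  have heq := (hcat _ hx _ _ h₁ h₂).eq_of_le_one hN
  have hp_mem : p ∈ ({p * q, p * q} : Multiset ℕ) := by rw [← heq]; simp
  simp only [insert_eq_cons, mem_cons, mem_singleton, or_self] at hp_mem
  have : q = 1 := Nat.eq_of_mul_eq_mul_left hp.pos (hp_mem.symm.trans (mul_one p).symm)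
  omega

end LocalACM

/-- The local singular ACM `M = M_{p, bp}` (with `α = β = 1`) has
catenary degree 2. -/
theorem local_catenary_alpha_beta_one (p b : ℕ) (hp : p.Prime) (hb : 0 < b)
    (hacm : p * p ≡ p [MOD b * p]) :
    IsLeast (acmCatSet p (b * p)) 2 := by
  have hpb := modEq_one_of_mul_self_modEq hp.ne_zero hacm
  refine ⟨two_mem_acmCatSet hp hpb, fun N hN => ?_⟩
  by_contra! hlt
  exact notMem_acmCatSet_of_le_one hp hb hpb (by omega) hN
end

section
/- Let M = M_{p^α, bp^α} be a local singular ACM with α = β > 1 (so p^α ∈ M). Then the atoms of M are exactly the elements x ∈ M with α ≤ v_p(x) ≤ 2α − 1. -/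
/-!
Every element `≠ 1` of `M = M_{a, ba}` is `a (1 + kb)`, so a product of two such elements is
divisible by `a²`. Conversely, when `a ≡ 1 (mod b)` the condition `x/a ≡ 1 (mod b)` is inherited by
`x/a²`, so an element `x = a · (x/a)` with `a² ∣ x` splits off the factor `a` inside `M`. For
`a = p^α` this says that the atoms are the elements of `M` with `α ≤ v_p(x) < 2α`.
-/

theorem Nat.ModEq.modEq_one_of_mul_self {a b : ℕ} (ha : a ≠ 0) (h : a * a ≡ a [MOD b * a]) :
    a ≡ 1 [MOD b] := by
  rw [mul_comm b] at h
  exact Nat.ModEq.mul_left_cancel' ha (by rwa [mul_one])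

section ArithmeticCongruenceMonoid

variable {a b x : ℕ}

theorem acmMem.ne_zero {c : ℕ} (hx : acmMem a c x) (ha : a ≠ 0) : x ≠ 0 := by
  rcases hx with rfl | ⟨k, rfl⟩ <;> omega

theorem acmMem.exists_eq_mul (hx : acmMem a (b * a) x) (hx1 : x ≠ 1) :
    ∃ k, x = a * (1 + k * b) := by
  rcases hx with rfl | ⟨k, rfl⟩
  · exact absurd rfl hx1
  · exact ⟨k, by ring⟩

theorem acmMem_mul_of_modEq_one {w : ℕ} (hw : w ≠ 0) (h : w ≡ 1 [MOD b]) :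
    acmMem a (b * a) (a * w) := by
  obtain ⟨k, hk⟩ := (Nat.modEq_iff_dvd' (Nat.one_le_iff_ne_zero.mpr hw)).mp h.symm
  exact Or.inr ⟨k, by rw [← Nat.add_sub_cancel' (Nat.one_le_iff_ne_zero.mpr hw), hk]; ring⟩

theorem mul_self_dvd_mul_of_acmMem {y z : ℕ} (hy : acmMem a (b * a) y) (hz : acmMem a (b * a) z)
    (hy1 : y ≠ 1) (hz1 : z ≠ 1) : a * a ∣ y * z := by
  obtain ⟨k, rfl⟩ := hy.exists_eq_mul hy1
  obtain ⟨l, rfl⟩ := hz.exists_eq_mul hz1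
  exact mul_dvd_mul (dvd_mul_right _ _) (dvd_mul_right _ _)

theorem acmAtom_iff_of_modEq_one (ha : 1 < a) (hab : a ≡ 1 [MOD b]) (hx : acmMem a (b * a) x) :
    acmAtom a (b * a) x ↔ x ≠ 1 ∧ ¬ a * a ∣ x := by
  constructor
  · rintro ⟨-, hx1, hirr⟩
    refine ⟨hx1, fun hdvd => ?_⟩
    obtain ⟨k, rfl⟩ := hx.exists_eq_mul hx1
    obtain ⟨w, hw⟩ := (Nat.mul_dvd_mul_iff_left (by omega : 0 < a)).mp hdvd
    have hw0 : w ≠ 0 := by rintro rfl; simp at hw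
    have hw1 : w ≡ 1 [MOD b] := by
      have haw : a * w ≡ 1 [MOD b] := by rw [← hw]; simp [Nat.ModEq]
      simpa using (hab.mul_right w).symm.trans haw
    have hm : acmMem a (b * a) (1 + k * b) := hw ▸ acmMem_mul_of_modEq_one hw0 hw1
    rcases hirr a (1 + k * b) (Or.inr ⟨0, by ring⟩) hm rfl with ha1 | hm1
    · omega
    · exact ha.ne' (Nat.eq_one_of_mul_eq_one_right (hw ▸ hm1))
  · rintro ⟨hx1, hndvd⟩
    refine ⟨hx, hx1, fun y z hy hz hyz => ?_⟩
    by_contra! h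
    exact hndvd (hyz ▸ mul_self_dvd_mul_of_acmMem hy hz h.1 h.2)

end ArithmeticCongruenceMonoid

theorem local_atoms_alpha_eq_beta_general (p b α : ℕ) (hp : p.Prime)
    (hα : 1 < α) (hacm : p ^ α * p ^ α ≡ p ^ α [MOD b * p ^ α]) :
    ∀ x : ℕ, acmMem (p ^ α) (b * p ^ α) x →
      (acmAtom (p ^ α) (b * p ^ α) x ↔
        α ≤ x.factorization p ∧ x.factorization p ≤ 2 * α - 1) := by
  intro x hx
  have hpα : 1 < p ^ α := Nat.one_lt_pow (by omega) hp.one_lt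
  have hx0 : x ≠ 0 := hx.ne_zero (by omega)
  rw [acmAtom_iff_of_modEq_one hpα (hacm.modEq_one_of_mul_self (by omega)) hx, ← pow_add,
    hp.pow_dvd_iff_le_factorization hx0]
  have hx1 : x ≠ 1 ↔ α ≤ x.factorization p := by
    refine ⟨fun hx1 => ?_, fun hle hx1 => ?_⟩
    · obtain ⟨k, hk⟩ := hx.exists_eq_mul hx1
      exact (hp.pow_dvd_iff_le_factorization hx0).mp ⟨_, hk⟩
    · rw [hx1, Nat.factorization_one, Finsupp.zero_apply] at hle
      omega
  omega

/-- For the local singular ACM `M = M_{p^α, b p^α}` with `α = β > 1`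
(`p^α ∈ M`), the atoms of `M` are exactly the elements with `α ≤ v_p(x) ≤ 2α - 1`. -/
theorem local_atoms_alpha_eq_beta (p b α : ℕ) (hp : p.Prime) (hpb : ¬ p ∣ b)
    (hα : 1 < α) (hacm : p ^ α * p ^ α ≡ p ^ α [MOD b * p ^ α]) :
    ∀ x : ℕ, acmMem (p ^ α) (b * p ^ α) x →
      (acmAtom (p ^ α) (b * p ^ α) x ↔
        α ≤ x.factorization p ∧ x.factorization p ≤ 2 * α - 1) :=
  local_atoms_alpha_eq_beta_general p b α hp hα hacm
end

section
/- Let M = M_{a p^α, b p^α} be a local singular ACM with gcd(a,b) coprime conditions and let β be the least positive integer with p^β ∈ M. Then every element m ∈ M with v_p(m) ≥ α + β is reducible in M. -/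
/-! An element of `M_{ap^α, bp^α}` with `v_p(m) ≥ α + β` splits as `m = p^β · z` with
`p^α ∣ z`. The cofactor `z` lies in `M`: modulo `p^α` it is `0 ≡ ap^α`, and modulo `b`
every element `≠ 1` of `M` is `≡ ap^α ≡ 1` (an idempotent unit), so `z ≡ p^β z = m ≡ 1`.
By the Chinese remainder theorem `z ≡ ap^α [MOD bp^α]`, which for a positive `z` means
`z ∈ M`. -/

theorem Nat.ModEq.one_of_mul_self_of_coprime {A n : ℕ} (hA : A.Coprime n)
    (h : A * A ≡ A [MOD n]) : A ≡ 1 [MOD n] :=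
  Nat.ModEq.cancel_left_of_coprime hA.symm (by rwa [mul_one])

theorem acmMem.modEq_of_ne_one {A B x : ℕ} (hx : acmMem A B x) (hx1 : x ≠ 1) :
    x ≡ A [MOD B] := by
  obtain ⟨k, rfl⟩ := hx.resolve_left hx1
  exact Nat.add_mul_mod_self_right A k B

theorem acmMem_of_modEq_s17 {A B x : ℕ} (hAB : A ≤ B) (hx0 : x ≠ 0) (hx : x ≡ A [MOD B]) :
    acmMem A B x := by
  have hAx : A ≤ x := by
    rcases hAB.lt_or_eq with hlt | rfl
    · calc A = A % B := (Nat.mod_eq_of_lt hlt).symm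
        _ = x % B := hx.symm
        _ ≤ x := Nat.mod_le x B
    · exact Nat.le_of_dvd (Nat.pos_of_ne_zero hx0)
        (Nat.modEq_zero_iff_dvd.mp (hx.trans (Nat.modEq_zero_iff_dvd.mpr dvd_rfl)))
  obtain ⟨k, hk⟩ := (Nat.modEq_iff_dvd' hAx).mp hx.symm
  exact Or.inr ⟨k, by rw [mul_comm]; omega⟩

theorem acmMem_of_mul_mem_of_dvd {a b d y z : ℕ} (hab : a.Coprime b) (haleb : a ≤ b)
    (hdb : d.Coprime b) (hidem : (a * d) * (a * d) ≡ a * d [MOD b * d])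
    (hy : acmMem (a * d) (b * d) y) (hy1 : y ≠ 1) (hyz : acmMem (a * d) (b * d) (y * z))
    (hdz : d ∣ z) (hz0 : z ≠ 0) : acmMem (a * d) (b * d) z := by
  have hA : a * d ≡ 1 [MOD b] :=
    (hidem.of_mul_right d).one_of_mul_self_of_coprime (hab.mul_left hdb)
  have hyb : y ≡ 1 [MOD b] := ((hy.modEq_of_ne_one hy1).of_mul_right d).trans hA
  have hyzb : y * z ≡ 1 [MOD b] :=
    ((hyz.modEq_of_ne_one (by simp [hy1])).of_mul_right d).trans hA
  have hzb : z ≡ a * d [MOD b] :=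
    calc z = 1 * z := (one_mul z).symm
      _ ≡ y * z [MOD b] := hyb.symm.mul_right z
      _ ≡ 1 [MOD b] := hyzb
      _ ≡ a * d [MOD b] := hA.symm
  have hzd : z ≡ a * d [MOD d] :=
    (Nat.modEq_zero_iff_dvd.mpr hdz).trans (Nat.modEq_zero_iff_dvd.mpr (dvd_mul_left d a)).symm
  exact acmMem_of_modEq_s17 (Nat.mul_le_mul_right d haleb) hz0
    ((Nat.modEq_and_modEq_iff_modEq_mul hdb.symm).mp ⟨hzb, hzd⟩)

theorem local_high_valuation_reducible_general (p a b α β : ℕ) (hp : p.Prime) (haleb : a ≤ b)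
    (hab : Nat.Coprime a b) (hpb : ¬ p ∣ b) (hα : 0 < α)
    (hacm : (a * p ^ α) * (a * p ^ α) ≡ a * p ^ α [MOD b * p ^ α])
    (hβ : 0 < β) (hβmem : acmMem (a * p ^ α) (b * p ^ α) (p ^ β)) :
    ∀ m : ℕ, acmMem (a * p ^ α) (b * p ^ α) m → α + β ≤ m.factorization p →
      ∃ y z : ℕ, acmMem (a * p ^ α) (b * p ^ α) y ∧ acmMem (a * p ^ α) (b * p ^ α) z ∧
        y ≠ 1 ∧ z ≠ 1 ∧ m = y * z := by
  intro m hm hval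
  have hm0 : m ≠ 0 := by
    rintro rfl
    simp only [Finsupp.coe_zero, Pi.zero_apply, Nat.factorization_zero] at hval
    omega
  obtain ⟨c, rfl⟩ : p ^ (α + β) ∣ m := (hp.pow_dvd_iff_le_factorization hm0).mpr hval
  rw [add_comm, pow_add, mul_assoc] at hm hm0 ⊢
  have hpβ1 : p ^ β ≠ 1 := (Nat.one_lt_pow hβ.ne' hp.one_lt).ne'
  have hz1 : p ^ α * c ≠ 1 := fun h =>
    (Nat.one_lt_pow hα.ne' hp.one_lt).ne' (Nat.eq_one_of_mul_eq_one_right h)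
  refine ⟨p ^ β, p ^ α * c, hβmem, ?_, hpβ1, hz1, rfl⟩
  have hpαb : (p ^ α).Coprime b := ((hp.coprime_iff_not_dvd).mpr hpb).pow_left α
  exact acmMem_of_mul_mem_of_dvd hab haleb hpαb hacm hβmem hpβ1 hm
    (dvd_mul_right _ _) (right_ne_zero_of_mul hm0)

/-- In the local singular ACM `M = M_{a p^α, b p^α}` with `β` minimal such
that `p^β ∈ M`, every `m ∈ M` with `v_p(m) ≥ α + β` is reducible. -/
theorem local_high_valuation_reducible (p a b α β : ℕ) (hp : p.Prime) (ha : 0 < a) (haleb : a ≤ b)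
    (hab : Nat.Coprime a b) (hpa : ¬ p ∣ a) (hpb : ¬ p ∣ b) (hα : 0 < α)
    (hacm : (a * p ^ α) * (a * p ^ α) ≡ a * p ^ α [MOD b * p ^ α])
    (hβ : 0 < β) (hβmem : acmMem (a * p ^ α) (b * p ^ α) (p ^ β))
    (hβmin : ∀ γ : ℕ, 0 < γ → γ < β → ¬ acmMem (a * p ^ α) (b * p ^ α) (p ^ γ)) :
    ∀ m : ℕ, acmMem (a * p ^ α) (b * p ^ α) m → α + β ≤ m.factorization p →
      ∃ y z : ℕ, acmMem (a * p ^ α) (b * p ^ α) y ∧ acmMem (a * p ^ α) (b * p ^ α) z ∧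
        y ≠ 1 ∧ z ≠ 1 ∧ m = y * z :=
  local_high_valuation_reducible_general p a b α β hp haleb hab hpb hα hacm hβ hβmem
end
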